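/- arXiv:0902.2810 — 5 statements merged into one kernel-verified Lean document; each statement's English description precedes it below -/
import Mathlib

section
/- Let G be a finitely generated residually finite group. Then the automorphism group Aut(G) is residually finite. -/
/-!
A finite-index subgroup `H` of a finitely generated group `G` contains a characteristic
finite-index subgroup `M`: the intersection of the kernels of the finitely many homomorphisms
from `G` to `Perm (G ⧸ H)`, one of which has kernel the normal core of `H`. Every automorphism
of `G` then descends to `G ⧸ M`, giving a homomorphism from `Aut G` to the finite group
`Aut (G ⧸ M)`. If `φ g ≠ g`, choosing `H` to avoid `g⁻¹ * φ g` makes the image of `φ`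
nontrivial.
-/

open Subgroup

namespace MonoidHom

instance finite_of_fg {G P : Type*} [Group G] [Group P] [Finite P] [Group.FG G] :
    Finite (G →* P) := by
  obtain ⟨S, hS⟩ := Group.FG.out (G := G)
  refine Finite.of_injective (fun f : G →* P => fun s : S => f s) fun f f' h => ?_
  exact eq_of_eqOn_dense hS fun x hx => congrFun h ⟨x, hx⟩

end MonoidHom

namespace Subgroup

variable (G P : Type*) [Group G] [Group P]

def kerInf : Subgroup G := ⨅ f : G →* P, f.ker

variable {G P}

theorem mem_kerInf {x : G} : x ∈ kerInf G P ↔ ∀ f : G →* P, f x = 1 := by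
  simp only [kerInf, mem_iInf, MonoidHom.mem_ker]

instance kerInf_characteristic : (kerInf G P).Characteristic :=
  characteristic_iff_le_comap.mpr fun σ _ hx =>
    mem_kerInf.mpr fun f => mem_kerInf.mp hx (f.comp σ.toMonoidHom)

instance kerInf_finiteIndex [Group.FG G] [Finite P] : (kerInf G P).FiniteIndex :=
  finiteIndex_iInf fun f => finiteIndex_ker f

theorem kerInf_le_ker (f : G →* P) : kerInf G P ≤ f.ker := iInf_le _ f

theorem exists_characteristic_finiteIndex_le [Group.FG G] (H : Subgroup G) [H.FiniteIndex] :
    ∃ M : Subgroup G, M.Characteristic ∧ M.FiniteIndex ∧ M ≤ H :=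
  ⟨kerInf G (Equiv.Perm (G ⧸ H)), inferInstance, inferInstance,
    (kerInf_le_ker _).trans (normalCore_eq_ker H ▸ normalCore_le H)⟩

end Subgroup

namespace MulAut

variable {G : Type*} [Group G]

def quotient (M : Subgroup G) [M.Characteristic] : MulAut G →* MulAut (G ⧸ M) where
  toFun σ := QuotientGroup.congr M M σ (characteristic_iff_map_eq.mp ‹_› σ)
  map_one' := MulEquiv.ext fun q => QuotientGroup.induction_on q fun _ => rfl
  map_mul' _ _ := MulEquiv.ext fun q => QuotientGroup.induction_on q fun _ => rfl

@[simp]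
theorem quotient_apply_mk (M : Subgroup G) [M.Characteristic] (σ : MulAut G) (g : G) :
    quotient M σ g = ((σ g : G) : G ⧸ M) := rfl

end MulAut

namespace Group

instance residuallyFinite_mulAut {G : Type*} [Group G] [FG G] [ResiduallyFinite G] :
    ResiduallyFinite (MulAut G) := by
  refine residuallyFinite_of_forall_exists_finite_monoidHom fun φ hφ => ?_
  obtain ⟨g, hg⟩ : ∃ g : G, φ g ≠ g := by
    by_contra! h
    exact hφ (MulEquiv.ext h)
  obtain ⟨H, hH, hgH⟩ := residuallyFinite_iff_exists_finiteIndex.mp ‹_› (g⁻¹ * φ g)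
    fun h => hg (eq_of_inv_mul_eq_one h).symm
  obtain ⟨M, hMchar, hMfin, hMH⟩ := exists_characteristic_finiteIndex_le H
  refine ⟨MulAut (G ⧸ M), inferInstance, inferInstance, MulAut.quotient M,
    fun h => hgH (hMH ?_)⟩
  have hφg : ((φ g : G) : G ⧸ M) = g := by simpa using DFunLike.congr_fun h (g : G ⧸ M)
  exact QuotientGroup.eq.mp hφg.symm

end Group

/-- If `G` is a finitely generated residually finite group, then `Aut(G)`
is residually finite. -/
theorem aut_residuallyFinite (G : Type*) [Group G] (hfg : Group.FG G)
    (hrf : ∀ g : G, g ≠ 1 → ∃ N : Subgroup G, N.Normal ∧ N.FiniteIndex ∧ g ∉ N) :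
    ∀ φ : MulAut G, φ ≠ 1 →
      ∃ N : Subgroup (MulAut G), N.Normal ∧ N.FiniteIndex ∧ φ ∉ N := by
  have : Group.ResiduallyFinite G := Group.residuallyFinite_iff_exists_finiteIndex.mpr
    fun g hg => (hrf g hg).imp fun _ hN => hN.2
  intro φ hφ
  obtain ⟨N, hN⟩ := Group.exists_finiteIndexNormalSubgroup_notMem φ hφ
  exact ⟨N.toSubgroup, N.isNormal', N.isFiniteIndex', hN⟩
end

section
/- Let F be a free group of finite rank d ≥ 2 and let K be a normal subgroup of finite index in F, with quotient Γ = F/K. Then the action of Γ on the abelianization K^{ab} = K/[K,K] induced by conjugation in F is faithful: for every γ ∈ Γ with γ ≠ 1 there exists x ∈ K such that the image of γ·x·γ⁻¹ and the image of x in K^{ab} differ. -/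
/-!
If `γ ∉ K` acted trivially on `K^{ab}`, the subgroup `H = ⟨K, γ⟩` would satisfy `[H, H] ≤ [K, K]`.
By Nielsen–Schreier `H` is free, it is non-abelian because it contains powers of two distinct
generators of `F`, and `K` is a proper normal subgroup of it. Pick basis elements `s₀ ∉ K` and
`s₁ ≠ s₀` of `H` and map `H` to the wreath product `ℤ ≀ H/K` by sending `s₁` to `(e₁, s₁K)` and
every other basis element `s` to `(0, sK)`. Then `K` lands in the abelian base group, so `[K, K]`
is killed, whereas `[s₀, s₁]` is not, since `s₀K ≠ 1` moves the base element `e₁`.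
-/

open Subgroup

open scoped commutatorElement

theorem Subgroup.commutator_le_ker {G G' : Type*} [Group G] [Group G'] {f : G →* G'}
    {N : Subgroup G} (h : ∀ x ∈ N, ∀ y ∈ N, Commute (f x) (f y)) : ⁅N, N⁆ ≤ f.ker :=
  commutator_le.mpr fun x hx y hy => by
    rw [MonoidHom.mem_ker, map_commutatorElement, commutatorElement_eq_one_iff_commute]
    exact h x hx y hy

theorem Subgroup.commutator_closure_le {G : Type*} [Group G] {D : Subgroup G} [D.Normal]
    {s : Set G} (h : ∀ x ∈ s, ∀ y ∈ s, ⁅x, y⁆ ∈ D) : ⁅closure s, closure s⁆ ≤ D := by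
  let π := QuotientGroup.mk' D
  have hcomm : IsMulCommutative (closure (π '' s)) := by
    refine isMulCommutative_closure ?_
    rintro _ ⟨x, hx, rfl⟩ _ ⟨y, hy, rfl⟩
    rw [← commute_iff_eq, ← commutatorElement_eq_one_iff_commute, ← map_commutatorElement]
    exact (QuotientGroup.eq_one_iff _).mpr (h x hx y hy)
  have hmem {x : G} (hx : x ∈ closure s) : π x ∈ closure (π '' s) :=
    MonoidHom.map_closure π s ▸ mem_map_of_mem π hx
  rw [← QuotientGroup.ker_mk' D]
  exact commutator_le_ker fun x hx y hy =>
    congrArg Subtype.val (hcomm.is_comm.comm ⟨π x, hmem hx⟩ ⟨π y, hmem hy⟩)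

theorem Subgroup.commutator_le_commutator_subgroupOf {G : Type*} [Group G] {K H : Subgroup G}
    (hKH : K ≤ H) (h : ⁅H, H⁆ ≤ ⁅K, K⁆) :
    _root_.commutator H ≤ ⁅K.subgroupOf H, K.subgroupOf H⁆ := by
  rw [← map_le_map_iff_of_injective H.subtype_injective, map_subtype_commutator, map_commutator,
    subgroupOf_map_subtype, inf_eq_left.mpr hKH]
  exact h

namespace RegularWreathProduct

variable {D Q : Type*} [Group Q]

def ofBase [Group D] : (Q → D) →* D ≀ᵣ Q where
  toFun f := ⟨f, 1⟩
  map_one' := rfl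
  map_mul' f g := by ext <;> simp

theorem commute_of_right_eq_one [CommGroup D] {x y : D ≀ᵣ Q}
    (hx : x.right = 1) (hy : y.right = 1) : Commute x y := by
  ext <;> simp [hx, hy, mul_comm]

theorem not_commute_inl [Group D] [DecidableEq Q] {a : Q} (ha : a ≠ 1) {d : D} (hd : d ≠ 1)
    (b : Q) : ¬ Commute (inl a : D ≀ᵣ Q) ⟨Pi.mulSingle 1 d, b⟩ := by
  intro h
  -- conjugating by `inl a` moves the support `{1}` of the base element to `{a}`
  have := congrFun (congrArg left h) a
  simp only [mul_left, left_inl, right_inl, Pi.mul_apply, Pi.one_apply, inv_mul_cancel,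
    Pi.mulSingle_eq_same, one_mul, Pi.mulSingle_eq_of_ne ha, mul_one] at this
  exact hd this

end RegularWreathProduct

open RegularWreathProduct

theorem FreeGroup.not_commute_of_pow_of_pow {α : Type*} {i j : α} (hij : i ≠ j) {m n : ℕ}
    (hm : m ≠ 0) (hn : n ≠ 0) : ¬ Commute (of i ^ m) (of j ^ n) := by
  classical
  let g : Multiplicative ℤ := .ofAdd 1
  have hg {k : ℕ} (hk : k ≠ 0) : g ^ k ≠ 1 := by simpa [g, ← ofAdd_nsmul] using hk
  let φ : FreeGroup α →* Multiplicative ℤ ≀ᵣ Multiplicative ℤ :=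
    lift fun k => if k = i then inl g else if k = j then ofBase (Pi.mulSingle 1 g) else 1
  have hφi : φ (of i ^ m) = inl (g ^ m) := by simp [φ]
  have hφj : φ (of j ^ n) = ofBase (Pi.mulSingle 1 (g ^ n)) := by
    rw [map_pow, Pi.mulSingle_pow, map_pow]
    simp [φ, hij.symm]
  intro h
  have := h.map φ
  rw [hφi, hφj] at this
  exact not_commute_inl (hg hm) (hg hn) 1 this

theorem FreeGroup.exists_not_commute_of_finiteIndex {α : Type*} [Nontrivial α]
    (K : Subgroup (FreeGroup α)) [K.FiniteIndex] : ∃ u ∈ K, ∃ v ∈ K, ¬ Commute u v := by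
  obtain ⟨i, j, hij⟩ := exists_pair_ne α
  obtain ⟨m, hm, -, hmK⟩ := K.exists_pow_mem_of_index_ne_zero FiniteIndex.index_ne_zero (of i)
  obtain ⟨n, hn, -, hnK⟩ := K.exists_pow_mem_of_index_ne_zero FiniteIndex.index_ne_zero (of j)
  exact ⟨_, hmK, _, hnK, not_commute_of_pow_of_pow hij hm.ne' hn.ne'⟩

namespace IsFreeGroup

variable {G : Type*} [Group G] [IsFreeGroup G]

variable (G) in
theorem closure_range_of : closure (Set.range (of : Generators G → G)) = ⊤ := by
  rw [of, Set.range_comp]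
  exact (MonoidHom.map_closure (mulEquiv G : FreeGroup (Generators G) →* G) _).symm.trans
    (by rw [FreeGroup.closure_range_of, map_top_of_surjective _ (mulEquiv G).surjective])

theorem exists_of_notMem_of_ne_top {N : Subgroup G} (hN : N ≠ ⊤) : ∃ s, of s ∉ N := by
  by_contra! h
  exact hN (eq_top_iff.mpr (closure_range_of G ▸ (closure_le N).mpr (Set.range_subset_iff.mpr h)))

theorem nontrivial_generators_of_not_commute {u v : G} (huv : ¬ Commute u v) :
    Nontrivial (Generators G) := by
  by_contra! h
  have hcomm := isMulCommutative_closure (k := Set.range (of : Generators G → G)) (by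
    rintro _ ⟨a, rfl⟩ _ ⟨b, rfl⟩
    rw [Subsingleton.elim a b])
  rw [closure_range_of] at hcomm
  exact huv (congrArg Subtype.val (hcomm.is_comm.comm ⟨u, mem_top u⟩ ⟨v, mem_top v⟩))

theorem commutatorElement_of_of_notMem_commutator {N : Subgroup G} [N.Normal]
    {s₀ s₁ : Generators G} (hs : s₀ ≠ s₁) (hs₀ : of s₀ ∉ N) : ⁅of s₀, of s₁⁆ ∉ ⁅N, N⁆ := by
  classical
  let χ := QuotientGroup.mk' N
  let ρ : G →* Multiplicative ℤ ≀ᵣ (G ⧸ N) :=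
    lift fun s => ⟨if s = s₁ then Pi.mulSingle 1 (.ofAdd 1) else 1, χ (of s)⟩
  have hρN (x : G) (hx : x ∈ N) : (ρ x).right = 1 := by
    have hρχ : rightHom.comp ρ = χ := ext_hom fun s => by simp [ρ]
    exact (DFunLike.congr_fun hρχ x).trans ((QuotientGroup.eq_one_iff x).mpr hx)
  have hker : ⁅N, N⁆ ≤ ρ.ker := commutator_le_ker fun x hx y hy =>
    commute_of_right_eq_one (hρN x hx) (hρN y hy)
  intro h
  have := hker h
  rw [MonoidHom.mem_ker, map_commutatorElement, commutatorElement_eq_one_iff_commute] at this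
  rw [lift_of, lift_of, if_neg hs, if_pos rfl] at this
  exact not_commute_inl ((QuotientGroup.eq_one_iff _).not.mpr hs₀) (by decide) _ this

theorem commutator_not_le_commutator {N : Subgroup G} [N.Normal] (hN : N ≠ ⊤) {u v : G}
    (huv : ¬ Commute u v) : ¬ _root_.commutator G ≤ ⁅N, N⁆ := by
  have := nontrivial_generators_of_not_commute huv
  obtain ⟨s₀, hs₀⟩ := exists_of_notMem_of_ne_top hN
  obtain ⟨s₁, hs⟩ := exists_ne s₀
  exact fun h => commutatorElement_of_of_notMem_commutator hs.symm hs₀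
    (h (commutator_mem_commutator (mem_top _) (mem_top _)))

end IsFreeGroup

/-- If `K` is a finite-index normal subgroup of a free group `F` of rank
`d ≥ 2`, the conjugation action of `Γ = F/K` on the abelianization `K/[K,K]` is
faithful: any `γ ∈ F` not in `K` (i.e. nontrivial in `Γ`) moves the image in `K^{ab}`
of some `x ∈ K`, which is expressed by `γ·x·γ⁻¹·x⁻¹ ∉ [K,K]`. -/
theorem conjugation_action_on_abelianization_faithful (d : ℕ) (hd : 2 ≤ d)
    (K : Subgroup (FreeGroup (Fin d))) (hN : K.Normal) (hFI : K.FiniteIndex) :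
    ∀ γ : FreeGroup (Fin d), γ ∉ K →
      ∃ x ∈ K, γ * x * γ⁻¹ * x⁻¹ ∉ (⁅K, K⁆ : Subgroup (FreeGroup (Fin d))) := by
  intro γ hγ
  by_contra! hfix
  have : Nontrivial (Fin d) := Fin.nontrivial_iff_two_le.mpr hd
  let H := closure (insert γ (K : Set (FreeGroup (Fin d))))
  have hKH : K ≤ H := fun x hx => subset_closure (Set.mem_insert_of_mem γ hx)
  have hHK : ⁅H, H⁆ ≤ ⁅K, K⁆ := by
    refine commutator_closure_le ?_
    rintro x (rfl | hx) y (rfl | hy)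
    · rw [commutatorElement_self]; exact one_mem _
    · exact hfix y hy
    · rw [← commutatorElement_inv]; exact inv_mem (hfix x hx)
    · exact commutator_mem_commutator hx hy
  obtain ⟨u, hu, v, hv, huv⟩ := FreeGroup.exists_not_commute_of_finiteIndex K
  refine IsFreeGroup.commutator_not_le_commutator (N := K.subgroupOf H) ?_
    (u := ⟨u, hKH hu⟩) (v := ⟨v, hKH hv⟩) (fun h => huv (congrArg Subtype.val h))
    (commutator_le_commutator_subgroupOf hKH hHK)
  intro htop
  have hγH : γ ∈ H := subset_closure (Set.mem_insert γ _)
  exact hγ (mem_subgroupOf.mp (htop ▸ mem_top (⟨γ, hγH⟩ : H)))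
end

section
/- Let F be a free group of finite rank d ≥ 2, let K be a characteristic subgroup of finite index in F with quotient Γ = F/K, and let ψ be an automorphism of F. If the automorphism of Γ induced by ψ is nontrivial, then the automorphism of the abelianization K^{ab} = K/[K,K] induced by the restriction of ψ to K is nontrivial. -/
/-!
Let `Γ = F ⧸ K` and let `D : F → ℚ[Γ]^d` be the Fox derivative relative to `F → Γ`, the crossed
homomorphism with `D (u * v) = D u + ū • D v` and `D xᵢ = eᵢ`. On `K` it is a homomorphism, so it
kills `[K, K]`. Its values on the Schreier generators of `K` span a space containing the kernel of
`∂ f = ∑ fᵢ (x̄ᵢ - 1)`, and since the image of `∂` misses `1`, that kernel has dimension more than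
`(d - 1) |Γ|`. If `ψ` acted trivially on `K/[K, K]`, then `D ∘ ψ = D` on `K`, and
`D (g x g⁻¹) = ḡ • D x` shows that `γ = (ψ g)⁻¹ g ∈ Γ` fixes `D '' K` pointwise. But the vectors
fixed by a subgroup `1 ≠ H ≤ Γ` form a space of dimension at most `d [Γ : H] ≤ (d - 1) |Γ|`,
so `γ = 1`.
-/

namespace FreeGroup

variable {ι R : Type*} [DecidableEq ι] [Ring R] (ρ : FreeGroup ι →* Rˣ)

-- `foxDeriv` is the first component of this lift of `ρ`; the crossed-homomorphism rule
-- is then the multiplication law of the semidirect product.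
noncomputable def foxLift :
    FreeGroup ι →* Multiplicative (ι → R) ⋊[(MulAutMultiplicative (ι → R)).symm.toMonoidHom.comp
      (DistribMulAction.toAddAut Rˣ (ι → R))] Rˣ :=
  lift fun i => ⟨.ofAdd (Pi.single i 1), ρ (of i)⟩

theorem rightHom_comp_foxLift : SemidirectProduct.rightHom.comp (foxLift ρ) = ρ :=
  ext_hom _ _ fun i => by rw [MonoidHom.comp_apply, foxLift, lift_apply_of]; rfl

noncomputable def foxDeriv (u : FreeGroup ι) : ι → R := (foxLift ρ u).left.toAdd

theorem foxDeriv_mul (u v : FreeGroup ι) :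
    foxDeriv ρ (u * v) = foxDeriv ρ u + ρ u • foxDeriv ρ v := by
  have h : (foxLift ρ u).right = ρ u := DFunLike.congr_fun (rightHom_comp_foxLift ρ) u
  rw [foxDeriv, _root_.map_mul, SemidirectProduct.mul_left, h]
  rfl

theorem foxDeriv_of (i : ι) : foxDeriv ρ (of i) = Pi.single i 1 := by
  rw [foxDeriv, foxLift, lift_apply_of]; rfl

theorem foxDeriv_one : foxDeriv ρ 1 = 0 := by
  simpa using foxDeriv_mul ρ 1 1

theorem foxDeriv_inv (u : FreeGroup ι) : foxDeriv ρ u⁻¹ = -((ρ u)⁻¹ • foxDeriv ρ u) := by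
  have h := foxDeriv_mul ρ u⁻¹ u
  rw [inv_mul_cancel, foxDeriv_one, _root_.map_inv] at h
  exact (neg_eq_of_add_eq_zero_left h.symm).symm

variable {ρ}

theorem foxDeriv_mul_inv_of_map_eq {u w : FreeGroup ι} (h : ρ u = ρ w) :
    foxDeriv ρ (u * w⁻¹) = foxDeriv ρ u - foxDeriv ρ w := by
  rw [foxDeriv_mul, foxDeriv_inv, h, smul_neg, smul_inv_smul, sub_eq_add_neg]

theorem foxDeriv_mul_of_mem_ker {u : FreeGroup ι} (hu : u ∈ ρ.ker) (v : FreeGroup ι) :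
    foxDeriv ρ (u * v) = foxDeriv ρ u + foxDeriv ρ v := by
  rw [foxDeriv_mul, hu, one_smul]

theorem foxDeriv_conj {x : FreeGroup ι} (hx : x ∈ ρ.ker) (g : FreeGroup ι) :
    foxDeriv ρ (g * x * g⁻¹) = ρ g • foxDeriv ρ x := by
  rw [foxDeriv_mul, foxDeriv_mul, foxDeriv_inv, _root_.map_mul, hx, mul_one, smul_neg,
    smul_inv_smul, add_neg_cancel_comm]

variable (ρ) in
noncomputable def foxDerivHom : ρ.ker →* Multiplicative (ι → R) where
  toFun x := .ofAdd (foxDeriv ρ x)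
  map_one' := congrArg _ (foxDeriv_one ρ)
  map_mul' x y := congrArg _ (foxDeriv_mul_of_mem_ker x.2 y)

theorem foxDeriv_eq_zero_of_mem_commutator {N : Subgroup (FreeGroup ι)} (hN : N ≤ ρ.ker)
    {x : FreeGroup ι} (hx : x ∈ ⁅N, N⁆) : foxDeriv ρ x = 0 := by
  have : ⁅N, N⁆ ≤ (foxDerivHom ρ).ker.map ρ.ker.subtype :=
    calc ⁅N, N⁆ ≤ ⁅ρ.ker, ρ.ker⁆ := Subgroup.commutator_mono hN hN
      _ = (commutator ρ.ker).map ρ.ker.subtype := by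
        rw [commutator_def, Subgroup.map_commutator, ← MonoidHom.range_eq_map,
          Subgroup.range_subtype]
      _ ≤ _ := Subgroup.map_mono (Abelianization.commutator_subset_ker _)
  obtain ⟨y, hy, rfl⟩ := this hx
  exact congrArg Multiplicative.toAdd hy

theorem smul_foxDeriv_eq_of_mul_inv_mem_commutator (ψ : FreeGroup ι →* FreeGroup ι)
    {N : Subgroup (FreeGroup ι)} [N.Normal] (hN : N ≤ ρ.ker) (hψN : ∀ x ∈ N, ψ x ∈ N)
    (hψ : ∀ x ∈ N, ψ x * x⁻¹ ∈ ⁅N, N⁆) (g : FreeGroup ι) {x : FreeGroup ι} (hx : x ∈ N) :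
    ρ (ψ g) • foxDeriv ρ x = ρ g • foxDeriv ρ x := by
  have hfix : ∀ y ∈ N, foxDeriv ρ (ψ y) = foxDeriv ρ y := fun y hy => by
    rw [← inv_mul_cancel_right (ψ y) y,
      foxDeriv_mul_of_mem_ker (hN (Subgroup.commutator_le_left N N (hψ y hy))),
      foxDeriv_eq_zero_of_mem_commutator hN (hψ y hy), zero_add]
  calc ρ (ψ g) • foxDeriv ρ x = ρ (ψ g) • foxDeriv ρ (ψ x) := by rw [hfix x hx]
    _ = foxDeriv ρ (ψ (g * x * g⁻¹)) := by
      rw [_root_.map_mul, _root_.map_mul, _root_.map_inv, foxDeriv_conj (hN (hψN x hx))]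
    _ = ρ g • foxDeriv ρ x := by
      rw [hfix _ (Subgroup.Normal.conj_mem ‹_› x hx g), foxDeriv_conj (hN hx)]

variable [Fintype ι]

variable (ρ) in
noncomputable def foxBoundary : (ι → R) →ₗ[R] R :=
  Fintype.linearCombination R fun i => (ρ (of i) : R) - 1

end FreeGroup

namespace MonoidAlgebra

variable (k G : Type*) [CommRing k] [Group G]

noncomputable def unitsOf : G →* (MonoidAlgebra k G)ˣ :=
  (Units.map (of k G)).comp toUnits.toMonoidHom

variable {k G}

@[simp]
theorem val_unitsOf (g : G) : (unitsOf k G g : MonoidAlgebra k G) = single g 1 := rfl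

end MonoidAlgebra

open MonoidAlgebra

namespace FreeGroup

section Schreier

variable {ι k G : Type*} [DecidableEq ι] [CommRing k] [Group G] {π : FreeGroup ι →* G}

theorem foxBoundary_single_single [Fintype ι] (i : ι) (c : G) :
    foxBoundary ((unitsOf k G).comp π) (Pi.single i (single c 1)) =
      single (c * π (of i)) 1 - single c 1 := by
  rw [foxBoundary, Fintype.linearCombination_apply_single, smul_eq_mul, mul_sub, mul_one]
  simp [single_mul_single]

theorem foxDeriv_schreierGenerator {s : G → FreeGroup ι} (hs : ∀ c, π (s c) = c)
    (i : ι) (c : G) :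
    foxDeriv ((unitsOf k G).comp π) (s c * of i * (s (c * π (of i)))⁻¹) =
      Pi.single i (single c 1) + foxDeriv ((unitsOf k G).comp π) (s c) -
        foxDeriv ((unitsOf k G).comp π) (s (c * π (of i))) := by
  have hρ : (unitsOf k G).comp π (s c * of i) = (unitsOf k G).comp π (s (c * π (of i))) := by
    simp [hs]
  rw [foxDeriv_mul_inv_of_map_eq hρ, foxDeriv_mul, foxDeriv_of, ← Pi.single_smul',
    Units.smul_def, smul_eq_mul, mul_one]
  simp [hs, add_comm]

theorem ker_foxBoundary_le_span_foxDeriv [Fintype ι] (hπ : Function.Surjective π) :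
    (LinearMap.ker (foxBoundary ((unitsOf k G).comp π))).restrictScalars k ≤
      Submodule.span k (foxDeriv ((unitsOf k G).comp π) '' π.ker) := by
  let s := Function.surjInv hπ
  have hs : ∀ c, π (s c) = c := Function.surjInv_eq hπ
  let r := (MonoidAlgebra.basis G k).constr k fun c => foxDeriv ((unitsOf k G).comp π) (s c)
  have hr : ∀ c, r (single c 1) = foxDeriv ((unitsOf k G).comp π) (s c) := fun c => by
    rw [← basis_apply, Module.Basis.constr_basis]
  -- `f ↦ f - r (∂ f)` fixes `ker ∂` and sends the basis vector `c • eᵢ` to the Fox derivative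
  -- of the Schreier generator `s c * xᵢ * (s (c * x̄ᵢ))⁻¹`.
  let P := LinearMap.id - r ∘ₗ (foxBoundary ((unitsOf k G).comp π)).restrictScalars k
  have hP : (⊤ : Submodule k (ι → MonoidAlgebra k G)).map P ≤
      Submodule.span k (foxDeriv ((unitsOf k G).comp π) '' π.ker) := by
    rw [← (Pi.basis fun _ : ι => MonoidAlgebra.basis G k).span_eq, Submodule.map_span_le]
    rintro _ ⟨⟨i, c⟩, rfl⟩
    refine Submodule.subset_span ⟨s c * of i * (s (c * π (of i)))⁻¹, by simp [hs], ?_⟩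
    simp only [P, Pi.basis_apply, basis_apply, LinearMap.sub_apply, LinearMap.id_apply,
      LinearMap.comp_apply, LinearMap.restrictScalars_apply, foxBoundary_single_single, map_sub,
      hr, foxDeriv_schreierGenerator hs]
    abel
  intro f hf
  have hPf : P f = f := by simp [P, LinearMap.mem_ker.mp hf]
  exact hPf ▸ hP ⟨f, trivial, rfl⟩

end Schreier

section Dimension

variable {ι k G : Type*} [Fintype ι] [Field k] [Group G] [Finite G]

theorem card_mul_card_lt_finrank_ker_foxBoundary_add_card (π : FreeGroup ι →* G) :
    Fintype.card ι * Nat.card G <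
      Module.finrank k ((LinearMap.ker (foxBoundary ((unitsOf k G).comp π))).restrictScalars k) +
        Nat.card G := by
  set α := (foxBoundary ((unitsOf k G).comp π)).restrictScalars k
  let ε := MonoidAlgebra.lift k k G 1
  have hεα : ∀ f, ε (α f) = 0 := fun f => by
    simp [α, ε, foxBoundary, Fintype.linearCombination_apply]
  have hrange : LinearMap.range α ≠ ⊤ := fun h => by
    obtain ⟨f, hf⟩ := LinearMap.range_eq_top.1 h 1
    simpa [hf, ε] using hεα f
  have hdimA : Module.finrank k (MonoidAlgebra k G) = Nat.card G :=
    Module.finrank_eq_nat_card_basis (MonoidAlgebra.basis G k)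
  have hdimV : Module.finrank k (ι → MonoidAlgebra k G) = Fintype.card ι * Nat.card G := by
    simp [Module.finrank_pi_fintype, hdimA]
  have hrank := LinearMap.finrank_range_add_finrank_ker α
  have hlt := Submodule.finrank_lt hrange
  rw [← LinearMap.ker_restrictScalars]
  change _ < Module.finrank k (LinearMap.ker α) + _
  omega

theorem finrank_le_card_mul_index_of_forall_smul_eq {H : Subgroup G}
    {W : Submodule k (ι → MonoidAlgebra k G)} (hW : ∀ h ∈ H, ∀ f ∈ W, unitsOf k G h • f = f) :
    Module.finrank k W ≤ Fintype.card ι * H.index := by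
  let Q := Quotient (QuotientGroup.rightRel H)
  have : Fintype Q := Fintype.ofFinite Q
  let L : (ι → MonoidAlgebra k G) →ₗ[k] (ι × Q → k) :=
    { toFun f p := (f p.1).coeff p.2.out
      map_add' _ _ := rfl
      map_smul' _ _ := rfl }
  -- The coefficients of an `H`-invariant vector are constant on the cosets `H * c`.
  have hL : Function.Injective (L ∘ₗ W.subtype) := by
    rw [← LinearMap.ker_eq_bot, eq_bot_iff]
    rintro ⟨f, hf⟩ hLf
    have hinv : ∀ i, ∀ h ∈ H, ∀ c, (f i).coeff (h * c) = (f i).coeff c := fun i h hh c => by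
      simpa [Units.smul_def] using congrArg (fun f => (f i).coeff (h * c)) (hW h hh f hf).symm
    rw [Submodule.mem_bot, Submodule.mk_eq_zero]
    ext i c
    have hout : (⟦c⟧ : Q).out * c⁻¹ ∈ H := by
      simpa using inv_mem <| QuotientGroup.rightRel_apply.1 <|
        Quotient.mk_out (s := QuotientGroup.rightRel H) c
    have hzero : (f i).coeff (⟦c⟧ : Q).out = 0 := congrFun (LinearMap.mem_ker.1 hLf) (i, ⟦c⟧)
    rw [← inv_mul_cancel_right (⟦c⟧ : Q).out c, hinv i _ hout c] at hzero
    simpa using hzero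
  calc Module.finrank k W ≤ Module.finrank k (ι × Q → k) :=
        LinearMap.finrank_le_finrank_of_injective hL
    _ = Fintype.card ι * H.index := by
      rw [Module.finrank_fintype_fun_eq_card, Fintype.card_prod, Subgroup.index,
        ← Nat.card_congr (QuotientGroup.quotientRightRelEquivQuotientLeftRel H),
        Nat.card_eq_fintype_card]

theorem eq_one_of_forall_smul_foxDeriv_eq [DecidableEq ι] (hι : 2 ≤ Fintype.card ι)
    {π : FreeGroup ι →* G} (hπ : Function.Surjective π) {γ : G}
    (hγ : ∀ x ∈ π.ker, unitsOf k G γ • foxDeriv ((unitsOf k G).comp π) x =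
      foxDeriv ((unitsOf k G).comp π) x) : γ = 1 := by
  set W := (LinearMap.ker (foxBoundary ((unitsOf k G).comp π))).restrictScalars k
  let H := (fixingSubgroup (MonoidAlgebra k G)ˣ (W : Set (ι → MonoidAlgebra k G))).comap
    (unitsOf k G)
  have hγH : γ ∈ H := by
    have hspan : Submodule.span k (foxDeriv ((unitsOf k G).comp π) '' π.ker) ≤
        LinearMap.eqLocus (DistribSMul.toLinearMap k _ (unitsOf k G γ)) LinearMap.id :=
      Submodule.span_le.2 fun _ ⟨x, hx, hfx⟩ => hfx ▸ hγ x hx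
    exact (mem_fixingSubgroup_iff _).2 fun f hf =>
      hspan (ker_foxBoundary_le_span_foxDeriv hπ hf)
  by_contra hγ1
  have hcard : 2 ≤ Nat.card H :=
    (Subgroup.one_lt_card_iff_ne_bot H).2 fun h => hγ1 (by simpa [h] using hγH)
  have hdim := card_mul_card_lt_finrank_ker_foxBoundary_add_card (k := k) π
  have hW := finrank_le_card_mul_index_of_forall_smul_eq (W := W) (H := H)
    fun h hh f hf => (mem_fixingSubgroup_iff _).1 hh f hf
  have hH := H.index_mul_card
  -- `n [G : H] + |G| ≤ n |G|` as soon as `n ≥ 2` and `|H| ≥ 2`.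
  nlinarith

end Dimension

end FreeGroup

/-- Let `K` be a characteristic finite-index subgroup of a free group `F`
of rank `d ≥ 2` and `ψ` an automorphism of `F`.  If the automorphism induced by `ψ` on
`Γ = F/K` is nontrivial (some `g` has `ψ(g)·g⁻¹ ∉ K`), then the automorphism induced by
`ψ` on the abelianization `K/[K,K]` is nontrivial (some `x ∈ K` has `ψ(x)·x⁻¹ ∉ [K,K]`). -/
theorem nontrivial_on_quotient_implies_nontrivial_on_homology (d : ℕ) (hd : 2 ≤ d)
    (K : Subgroup (FreeGroup (Fin d))) (hchar : K.Characteristic) (hFI : K.FiniteIndex)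
    (ψ : FreeGroup (Fin d) ≃* FreeGroup (Fin d))
    (hψ : ∃ g : FreeGroup (Fin d), ψ g * g⁻¹ ∉ K) :
    ∃ x ∈ K, ψ x * x⁻¹ ∉ (⁅K, K⁆ : Subgroup (FreeGroup (Fin d))) := by
  by_contra! hψab
  obtain ⟨g, hg⟩ := hψ
  have : Finite (FreeGroup (Fin d) ⧸ K) := Subgroup.finite_quotient_of_finiteIndex
  set π := QuotientGroup.mk' K
  set ρ := (unitsOf ℚ (FreeGroup (Fin d) ⧸ K)).comp π
  have hKρ : K ≤ ρ.ker := fun x hx => by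
    simp [ρ, π, MonoidHom.mem_ker, (QuotientGroup.eq_one_iff x).2 hx]
  have hψK : ∀ x ∈ K, ψ x ∈ K := fun x hx => by
    rwa [← hchar.fixed ψ] at hx
  have hfix := fun x (hx : x ∈ K) =>
    FreeGroup.smul_foxDeriv_eq_of_mul_inv_mem_commutator ψ.toMonoidHom hKρ hψK hψab g hx
  have hγ : π (ψ g)⁻¹ * π g = 1 := by
    refine FreeGroup.eq_one_of_forall_smul_foxDeriv_eq (k := ℚ) (by simpa using hd)
      (QuotientGroup.mk'_surjective K) fun x hx => ?_
    rw [QuotientGroup.ker_mk'] at hx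
    rw [map_mul, map_inv, mul_smul]
    exact inv_smul_eq_iff.2 (hfix x hx).symm
  apply hg
  rw [← QuotientGroup.ker_mk' K, MonoidHom.mem_ker, map_mul, map_inv]
  exact mul_inv_eq_one.2 (inv_mul_eq_one.1 hγ)
end

section
/- Let G be a finitely generated residually finite group. Suppose that for every nontrivial g ∈ G there exists a finite-index characteristic subgroup K_g of G such that conjugation by g induces a nontrivial automorphism of the abelianization K_g/[K_g,K_g]. Then for every nontrivial automorphism ψ of G there exists a finite-index characteristic subgroup K of G such that ψ induces a nontrivial automorphism of K/[K,K]. -/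
/-!
Pick `g` with `ψ g ≠ g` and let `K` be the characteristic subgroup on whose abelianization
conjugation by `c = ψ g * g⁻¹` is nontrivial. If `ψ` acted trivially on `K/[K,K]`, then applying
`ψ` to `g⁻¹ x g` would give `ψ(g)⁻¹ x ψ(g) ≡ g⁻¹ x g` modulo `[K,K]` for every `x ∈ K`, i.e. `c`
would commute with `K` modulo `[K,K]`, a contradiction.
-/

section

variable {G : Type*} [Group G]

theorem commute_map_mul_inv_of_map_eq {Q : Type*} [Group Q] {K : Subgroup G} [K.Normal]
    (ψ : G →* G) (f : G →* Q) (hψ : ∀ x ∈ K, f (ψ x) = f x) (g : G) {x : G} (hx : x ∈ K) :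
    Commute (f (ψ g * g⁻¹)) (f x) := by
  have hconj := hψ _ (Subgroup.Normal.conj_mem' ‹_› x hx g)
  simp only [map_mul, map_inv, hψ x hx] at hconj
  rw [map_mul, map_inv]
  calc f (ψ g) * (f g)⁻¹ * f x = f (ψ g) * ((f g)⁻¹ * f x * f g) * (f g)⁻¹ := by group
    _ = f (ψ g) * ((f (ψ g))⁻¹ * f x * f (ψ g)) * (f g)⁻¹ := by rw [hconj]
    _ = f x * (f (ψ g) * (f g)⁻¹) := by group

theorem mul_mul_inv_mul_inv_mem_of_forall_mul_inv_mem {K N : Subgroup G} [K.Normal] [N.Normal]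
    (ψ : G →* G) (hψ : ∀ x ∈ K, ψ x * x⁻¹ ∈ N) (g : G) {x : G} (hx : x ∈ K) :
    ψ g * g⁻¹ * x * (ψ g * g⁻¹)⁻¹ * x⁻¹ ∈ N := by
  have hψ' : ∀ x ∈ K, QuotientGroup.mk' N (ψ x) = QuotientGroup.mk' N x := fun x hx =>
    QuotientGroup.eq_iff_div_mem.mpr (by simpa only [div_eq_mul_inv] using hψ x hx)
  rw [← commutatorElement_def, ← QuotientGroup.eq_one_iff, ← QuotientGroup.mk'_apply,
    map_commutatorElement, commutatorElement_eq_one_iff_commute]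
  exact commute_map_mul_inv_of_map_eq ψ _ hψ' g hx

end

theorem aut_acts_nontrivially_on_some_finiteIndex_abelianization_general (G : Type*) [Group G]
    (hconj : ∀ g : G, g ≠ 1 → ∃ K : Subgroup G, K.Characteristic ∧ K.FiniteIndex ∧
      ∃ x ∈ K, g * x * g⁻¹ * x⁻¹ ∉ (⁅K, K⁆ : Subgroup G))
    (ψ : G ≃* G) (hψ : ψ ≠ MulEquiv.refl G) :
    ∃ K : Subgroup G, K.Characteristic ∧ K.FiniteIndex ∧
      ∃ x ∈ K, ψ x * x⁻¹ ∉ (⁅K, K⁆ : Subgroup G) := by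
  obtain ⟨g, hg⟩ : ∃ g, ψ g ≠ g := by
    by_contra! h
    exact hψ (MulEquiv.ext h)
  obtain ⟨K, hKc, hKf, x, hxK, hx⟩ := hconj (ψ g * g⁻¹) (mul_inv_eq_one.not.mpr hg)
  refine ⟨K, hKc, hKf, ?_⟩
  by_contra! hψK
  exact hx (mul_mul_inv_mul_inv_mem_of_forall_mul_inv_mem ψ.toMonoidHom hψK g hxK)

/-- Let `G` be a finitely generated residually finite group such that each
nontrivial `g ∈ G` acts nontrivially by conjugation on the abelianization of some
finite-index characteristic subgroup `K_g` (i.e. `g·x·g⁻¹·x⁻¹ ∉ [K_g,K_g]` for some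
`x ∈ K_g`).  Then every nontrivial automorphism `ψ` of `G` acts nontrivially on the
abelianization `K/[K,K]` of some finite-index characteristic subgroup `K`
(i.e. `ψ(x)·x⁻¹ ∉ [K,K]` for some `x ∈ K`). -/
theorem aut_acts_nontrivially_on_some_finiteIndex_abelianization (G : Type*) [Group G]
    (hfg : Group.FG G)
    (hrf : ∀ g : G, g ≠ 1 → ∃ N : Subgroup G, N.Normal ∧ N.FiniteIndex ∧ g ∉ N)
    (hconj : ∀ g : G, g ≠ 1 → ∃ K : Subgroup G, K.Characteristic ∧ K.FiniteIndex ∧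
      ∃ x ∈ K, g * x * g⁻¹ * x⁻¹ ∉ (⁅K, K⁆ : Subgroup G))
    (ψ : G ≃* G) (hψ : ψ ≠ MulEquiv.refl G) :
    ∃ K : Subgroup G, K.Characteristic ∧ K.FiniteIndex ∧
      ∃ x ∈ K, ψ x * x⁻¹ ∉ (⁅K, K⁆ : Subgroup G) :=
  aut_acts_nontrivially_on_some_finiteIndex_abelianization_general G hconj ψ hψ
end

section
/- Let F be a free group of finite rank d ≥ 2, let K be a characteristic finite-index subgroup of F with quotient Γ = F/K, let V = ℚ ⊗_ℤ K^{ab} with the conjugation action of Γ, and let ψ be an automorphism of F. If there is no ℚ-subspace of V other than 0 and V that is invariant both under the induced action of ψ and under the action of every element of Γ (i.e., the joint action of ψ and Γ on V is irreducible), then Γ is the trivial group. In fact, when Γ is nontrivial, the subspace V^Γ of Γ-fixed vectors is nonzero, proper, and invariant under the action induced by every automorphism of F. -/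
/-!
The subspace `V^Γ` of `Γ`-fixed vectors is invariant under every automorphism `ψ` of `F`,
since `ψ` intertwines conjugation by `ψ⁻¹ f` with conjugation by `f`. It is nonzero: averaging
over `Γ` the class of `g ^ [F : K]` gives a fixed vector on which the exponent-sum character of
`F` does not vanish. It is proper as soon as `Γ ≠ 1` and `d ≥ 2`: the Fox derivative `∂/∂x_c`,
read in `ℤ[Γ]` through the wreath product `ℤ^Γ ⋊ Γ`, restricts to a `Γ`-equivariant
homomorphism `K → ℤ^Γ`, and some `k ∈ K` has a non-constant derivative, so some conjugate of `k`
has a different class in `V`.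
-/

open scoped TensorProduct

/-- The conjugation action of `f : G` on the abelianization `K^{ab}` of a normal
subgroup `K ≤ G`. -/
noncomputable def conjAbHom {G : Type*} [Group G] (K : Subgroup G) [K.Normal] (f : G) :
    Abelianization K →* Abelianization K :=
  Abelianization.map ((MulAut.conjNormal (H := K) f).toMonoidHom)

/-- The `ℚ`-linear map on `V = ℚ ⊗_ℤ K^{ab}` induced by conjugation by `f : G`; this is
the action of the image of `f` in `Γ = G/K` on `V`. -/
noncomputable def conjLin {G : Type*} [Group G] (K : Subgroup G) [K.Normal] (f : G) :
    (ℚ ⊗[ℤ] Additive (Abelianization K)) →ₗ[ℚ] (ℚ ⊗[ℤ] Additive (Abelianization K)) :=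
  LinearMap.baseChange ℚ ((MonoidHom.toAdditive (conjAbHom K f)).toIntLinearMap)

/-- The restriction of an automorphism `ψ` of `G` to a characteristic subgroup `K`. -/
def autRestrict {G : Type*} [Group G] (K : Subgroup G) [K.Characteristic] (ψ : G ≃* G) :
    K →* K :=
  (ψ.toMonoidHom.domRestrict K).codRestrict K (fun x => by
    have h : K.comap ψ.toMonoidHom = K :=
      (Subgroup.characteristic_iff_comap_eq.mp inferInstance) ψ
    have hx : (x : G) ∈ K.comap ψ.toMonoidHom := by rw [h]; exact x.2
    exact Subgroup.mem_comap.mp hx)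

/-- The `ℚ`-linear map on `V = ℚ ⊗_ℤ K^{ab}` induced by an automorphism `ψ` of `G`. -/
noncomputable def autLin {G : Type*} [Group G] (K : Subgroup G) [K.Characteristic]
    (ψ : G ≃* G) :
    (ℚ ⊗[ℤ] Additive (Abelianization K)) →ₗ[ℚ] (ℚ ⊗[ℤ] Additive (Abelianization K)) :=
  LinearMap.baseChange ℚ
    ((MonoidHom.toAdditive (Abelianization.map (autRestrict K ψ))).toIntLinearMap)

/-- The subspace `V^Γ` of vectors fixed by the conjugation action of every element. -/
noncomputable def fixedSubmodule {G : Type*} [Group G] (K : Subgroup G) [K.Normal] :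
    Submodule ℚ (ℚ ⊗[ℤ] Additive (Abelianization K)) where
  carrier := {v | ∀ f : G, conjLin K f v = v}
  add_mem' := by
    intro a b ha hb f
    rw [map_add, ha f, hb f]
  zero_mem' := fun f => map_zero _
  smul_mem' := by
    intro c a ha f
    rw [map_smul, ha f]

abbrev RatAb (H : Type*) [Group H] : Type _ := ℚ ⊗[ℤ] Additive (Abelianization H)

namespace RatAb

variable {H H' H'' : Type*} [Group H] [Group H'] [Group H'']

noncomputable def map (φ : H →* H') : RatAb H →ₗ[ℚ] RatAb H' :=
  LinearMap.baseChange ℚ (MonoidHom.toAdditive (Abelianization.map φ)).toIntLinearMap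

@[simp]
lemma map_tmul_of (φ : H →* H') (r : ℚ) (h : H) :
    map φ (r ⊗ₜ .ofMul (.of h)) = r ⊗ₜ .ofMul (.of (φ h)) := rfl

lemma map_comp (φ : H' →* H'') (φ' : H →* H') : map (φ.comp φ') = map φ ∘ₗ map φ' := by
  rw [map, map, map, ← LinearMap.baseChange_comp, ← Abelianization.map_comp]
  rfl

noncomputable def eval (χ : H →* Multiplicative ℤ) : RatAb H →ₗ[ℚ] ℚ :=
  (TensorProduct.AlgebraTensorModule.rid ℤ ℚ ℚ).toLinearMap ∘ₗ
    LinearMap.baseChange ℚ (MonoidHom.toAdditiveLeft (Abelianization.lift χ)).toIntLinearMap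

@[simp]
lemma eval_tmul_of (χ : H →* Multiplicative ℤ) (r : ℚ) (h : H) :
    eval χ (r ⊗ₜ .ofMul (.of h)) = r * (χ h).toAdd := by
  simp [eval, mul_comm]

lemma eval_comp_map (χ : H' →* Multiplicative ℤ) (φ : H →* H') :
    eval χ ∘ₗ map φ = eval (χ.comp φ) := by
  have hlift :
      Abelianization.lift (χ.comp φ) = (Abelianization.lift χ).comp (Abelianization.map φ) :=
    Abelianization.hom_ext _ _ (by ext; simp)
  rw [eval, eval, map, LinearMap.comp_assoc, ← LinearMap.baseChange_comp, hlift]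
  rfl

end RatAb

section Conjugation

variable {G : Type*} [Group G] (K : Subgroup G) [K.Normal]

lemma conjLin_eq_map (f : G) : conjLin K f = RatAb.map (MulAut.conjNormal f).toMonoidHom := rfl

lemma conjLin_mul (f g : G) : conjLin K (f * g) = conjLin K f ∘ₗ conjLin K g := by
  rw [conjLin_eq_map, conjLin_eq_map, conjLin_eq_map, map_mul, ← RatAb.map_comp]
  rfl

lemma conjLin_of_mem {k : G} (hk : k ∈ K) : conjLin K k = LinearMap.id := by
  have hinner :
      Abelianization.map (MulAut.conjNormal (H := K) k).toMonoidHom = MonoidHom.id _ := by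
    refine Abelianization.hom_ext _ _ (MonoidHom.ext fun x => ?_)
    have hconj : MulAut.conjNormal k x = ⟨k, hk⟩ * x * (⟨k, hk⟩ : K)⁻¹ := Subtype.ext (by simp)
    simp [hconj]
  rw [conjLin_eq_map, RatAb.map, hinner]
  exact LinearMap.baseChange_id

lemma conjLin_eq_of_mk_eq {f g : G} (h : (f : G ⧸ K) = g) : conjLin K f = conjLin K g := by
  rw [← mul_inv_cancel_left f g, conjLin_mul, conjLin_of_mem K (QuotientGroup.eq.mp h),
    LinearMap.comp_id]

lemma conjLin_comp_autLin [K.Characteristic] (ψ : G ≃* G) (f : G) :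
    conjLin K f ∘ₗ autLin K ψ = autLin K ψ ∘ₗ conjLin K (ψ.symm f) := by
  rw [conjLin_eq_map, conjLin_eq_map, autLin, ← RatAb.map, ← RatAb.map_comp, ← RatAb.map_comp]
  congr 1
  ext
  simp [autRestrict]

lemma autLin_mem_fixedSubmodule [K.Characteristic] (ψ : G ≃* G) {v : RatAb K}
    (hv : v ∈ fixedSubmodule K) : autLin K ψ v ∈ fixedSubmodule K := fun f => by
  rw [← LinearMap.comp_apply, conjLin_comp_autLin, LinearMap.comp_apply, hv]

lemma conjLin_mem_fixedSubmodule (f : G) {v : RatAb K} (hv : v ∈ fixedSubmodule K) :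
    conjLin K f v ∈ fixedSubmodule K := by
  rwa [hv f]

lemma eval_comp_conjLin (χ : G →* Multiplicative ℤ) (f : G) :
    RatAb.eval (χ.comp K.subtype) ∘ₗ conjLin K f = RatAb.eval (χ.comp K.subtype) := by
  rw [conjLin_eq_map, RatAb.eval_comp_map]
  congr 1
  ext
  simp [mul_comm (χ f)]

end Conjugation

section FixedVectors

variable {G : Type*} [Group G] (K : Subgroup G) [K.Normal]

lemma sum_conjLin_out_mem_fixedSubmodule [Fintype (G ⧸ K)] (v : RatAb K) :
    ∑ q : G ⧸ K, conjLin K q.out v ∈ fixedSubmodule K := fun f => by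
  have hshift : ∀ q : G ⧸ K, conjLin K f (conjLin K q.out v) = conjLin K (f * q).out v := by
    intro q
    rw [← LinearMap.comp_apply, ← conjLin_mul]
    exact LinearMap.congr_fun (conjLin_eq_of_mk_eq K (by simp)) v
  simp only [map_sum, hshift]
  exact Fintype.sum_equiv (Equiv.mulLeft (f : G ⧸ K)) _ _ fun _ => rfl

/-- Averaging over `G ⧸ K` the image of `g ^ [G : K] ∈ K` gives a fixed vector, on which
the character `χ` takes the value `[G : K] ^ 2 * χ g ≠ 0`. -/
lemma fixedSubmodule_ne_bot [K.FiniteIndex] {χ : G →* Multiplicative ℤ} (hχ : χ ≠ 1) :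
    fixedSubmodule K ≠ ⊥ := by
  let := Fintype.ofFinite (G ⧸ K)
  obtain ⟨g, hg⟩ := DFunLike.ne_iff.mp hχ
  set v : RatAb K := 1 ⊗ₜ .ofMul (.of ⟨g ^ K.index, K.pow_index_mem g⟩)
  have hv : RatAb.eval (χ.comp K.subtype) v = K.index * (χ g).toAdd := by simp [v]
  have hsum : RatAb.eval (χ.comp K.subtype) (∑ q : G ⧸ K, conjLin K q.out v)
      = K.index * (K.index * (χ g).toAdd) := by
    simp only [map_sum, ← LinearMap.comp_apply, eval_comp_conjLin, hv, Finset.sum_const,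
      Finset.card_univ, nsmul_eq_mul, ← Nat.card_eq_fintype_card, ← Subgroup.index_eq_card]
  have hindex : (K.index : ℚ) ≠ 0 := Nat.cast_ne_zero.mpr K.index_ne_zero_of_finite
  have hg' : ((χ g).toAdd : ℚ) ≠ 0 := Int.cast_ne_zero.mpr (toAdd_eq_zero.not.mpr hg)
  intro hbot
  have hzero := (Submodule.mem_bot ℚ).mp (hbot ▸ sum_conjLin_out_mem_fixedSubmodule K v)
  rw [hzero, map_zero] at hsum
  exact mul_ne_zero hindex (mul_ne_zero hindex hg') hsum.symm

lemma fixedSubmodule_ne_top_of_conj {χ : K →* Multiplicative ℤ} {f : G} {k : K}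
    (h : χ (MulAut.conjNormal f k) ≠ χ k) : fixedSubmodule K ≠ ⊤ := by
  intro htop
  have hfix : conjLin K f (1 ⊗ₜ .ofMul (.of k)) = 1 ⊗ₜ .ofMul (.of k) :=
    (htop ▸ Submodule.mem_top : (1 ⊗ₜ .ofMul (.of k) : RatAb K) ∈ fixedSubmodule K) f
  have heval := congrArg (RatAb.eval χ) hfix
  rw [conjLin_eq_map, RatAb.map_tmul_of, RatAb.eval_tmul_of, RatAb.eval_tmul_of] at heval
  exact h (by simpa using heval)

end FixedVectors

section Wreath

variable (Q M : Type*) [Group Q] [Group M]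

def shiftAut : Q →* MulAut (Q → M) where
  toFun γ :=
    { toFun := fun w x => w (γ⁻¹ * x)
      invFun := fun w x => w (γ * x)
      left_inv := fun w => funext fun x => by simp
      right_inv := fun w => funext fun x => by simp
      map_mul' := fun _ _ => rfl }
  map_one' := by ext; simp
  map_mul' γ δ := by ext; simp [mul_assoc]

variable {Q M}

@[simp]
lemma shiftAut_apply (γ : Q) (w : Q → M) (x : Q) : shiftAut Q M γ w x = w (γ⁻¹ * x) := rfl

lemma shiftAut_mulSingle [DecidableEq Q] (γ x : Q) (m : M) :
    shiftAut Q M γ (Pi.mulSingle x m) = Pi.mulSingle (γ * x) m := by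
  ext y
  simp only [shiftAut_apply, Pi.mulSingle_apply, inv_mul_eq_iff_eq_mul]

lemma SemidirectProduct.conj_left_of_right_eq_one {N G : Type*} [CommGroup N] [Group G]
    {φ : G →* MulAut N} (u w : N ⋊[φ] G) (hw : w.right = 1) :
    (u * w * u⁻¹).left = φ u.right w.left := by
  simp [hw, mul_comm u.left, map_inv φ u.right, MulAut.inv_def]

lemma prod_mulSingle_pow_apply_one {Q : Type*} [Group Q] [DecidableEq Q] {β : Q}
    (hβ : IsOfFinOrder β) (m : Multiplicative ℤ) :
    (∏ i ∈ Finset.range (orderOf β), (Pi.mulSingle (β ^ i) m : Q → Multiplicative ℤ)) 1 = m := by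
  rw [Finset.prod_apply, Finset.prod_eq_single_of_mem 0 (by simpa using hβ.orderOf_pos)]
  · simp
  · intro i hi hi0
    refine Pi.mulSingle_eq_of_ne' (M := fun _ => Multiplicative ℤ) (fun h => hi0 ?_) m
    exact Nat.eq_zero_of_dvd_of_lt (orderOf_dvd_of_pow_eq_one h) (Finset.mem_range.mp hi)

lemma prod_mulSingle_pow_apply_of_notMem {Q : Type*} [Group Q] [DecidableEq Q] {β γ : Q}
    (hγ : γ ∉ Subgroup.zpowers β) (n : ℕ) (m : Multiplicative ℤ) :
    (∏ i ∈ Finset.range n, (Pi.mulSingle (β ^ i) m : Q → Multiplicative ℤ)) γ = 1 := by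
  rw [Finset.prod_apply]
  exact Finset.prod_eq_one fun i _ =>
    Pi.mulSingle_eq_of_ne' (M := fun _ => Multiplicative ℤ)
      (fun h : β ^ i = γ => hγ (h ▸ Subgroup.npow_mem_zpowers β i)) m

end Wreath

section FoxDerivative

open scoped Classical

variable {α : Type*} (K : Subgroup (FreeGroup α)) [K.Normal]

local notation "Γ" => FreeGroup α ⧸ K

/-- The letter `c` pushes a unit mass at the current position in `Γ`; the `Γ`-coordinate
records the position, so the mass vector of `w` is the Fox derivative `∂w/∂c` read in `ℤ[Γ]`. -/
noncomputable def foxLift (c : α) : FreeGroup α →* (Γ → Multiplicative ℤ) ⋊[shiftAut Γ _] Γ :=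
  FreeGroup.lift fun i =>
    ⟨if i = c then Pi.mulSingle 1 (.ofAdd 1) else 1, QuotientGroup.mk (FreeGroup.of i)⟩

lemma foxLift_right (c : α) (w : FreeGroup α) : (foxLift K c w).right = w := by
  have h : SemidirectProduct.rightHom.comp (foxLift K c) = QuotientGroup.mk' K :=
    FreeGroup.ext_hom _ _ fun i => by simp [foxLift]
  exact DFunLike.congr_fun h w

lemma foxLift_right_of_mem (c : α) (k : K) : (foxLift K c k).right = 1 := by
  rw [foxLift_right, QuotientGroup.eq_one_iff]
  exact k.2

noncomputable def foxDeriv (c : α) : K →* (Γ → Multiplicative ℤ) where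
  toFun k := (foxLift K c k).left
  map_one' := by simp
  map_mul' k k' := by simp [foxLift_right_of_mem]

lemma foxDeriv_apply (c : α) (k : K) : foxDeriv K c k = (foxLift K c k).left := rfl

lemma foxDeriv_conjNormal (c : α) (f : FreeGroup α) (k : K) :
    foxDeriv K c (MulAut.conjNormal f k) = shiftAut Γ _ f (foxDeriv K c k) := by
  rw [foxDeriv_apply, MulAut.conjNormal_apply, map_mul, map_mul, map_inv,
    SemidirectProduct.conj_left_of_right_eq_one _ _ (foxLift_right_of_mem K c k), foxLift_right]
  rfl

lemma foxLift_of_ne_left {c i : α} (h : i ≠ c) (t : ℤ) :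
    (foxLift K c (FreeGroup.of i ^ t)).left = 1 := by
  have hinr : foxLift K c (FreeGroup.of i) = .inr (FreeGroup.of i : Γ) :=
    SemidirectProduct.ext (by simp [foxLift, h]) (by simp [foxLift])
  rw [map_zpow, hinr, ← map_zpow, SemidirectProduct.left_inr]

lemma foxLift_of_pow_left (c : α) (n : ℕ) :
    (foxLift K c (FreeGroup.of c ^ n)).left
      = ∏ i ∈ Finset.range n, Pi.mulSingle ((FreeGroup.of c : Γ) ^ i) (.ofAdd 1) := by
  induction n with
  | zero => simp
  | succ n ih =>
    have hc : (foxLift K c (FreeGroup.of c)).left = Pi.mulSingle 1 (.ofAdd 1) := by simp [foxLift]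
    rw [pow_succ, map_mul, SemidirectProduct.mul_left, ih, foxLift_right, Finset.prod_range_succ,
      hc, QuotientGroup.mk_pow, shiftAut_mulSingle, mul_one]

lemma fixedSubmodule_ne_top_of_foxDeriv {c : α} {k : K} {γ : Γ}
    (h : foxDeriv K c k γ ≠ foxDeriv K c k 1) : fixedSubmodule K ≠ ⊤ :=
  fixedSubmodule_ne_top_of_conj K (χ := (Pi.evalMonoidHom _ γ).comp (foxDeriv K c)) (f := γ.out)
    (by simpa [foxDeriv_conjNormal] using h.symm)

/-- For `n` the order of `x_j` in `Γ`, `∂(x_j^n)/∂x_j` is the indicator of the cyclic subgroup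
generated by `x_j`. -/
lemma exists_foxDeriv_ne_of_zpowers_ne_top [Finite Γ] {j : α}
    (hj : Subgroup.zpowers (FreeGroup.of j : Γ) ≠ ⊤) :
    ∃ (k : K) (γ : Γ), foxDeriv K j k γ ≠ foxDeriv K j k 1 := by
  obtain ⟨γ, hγ⟩ := not_forall.mp (mt (Subgroup.eq_top_iff' _).mpr hj)
  have hfin : IsOfFinOrder (FreeGroup.of j : Γ) := isOfFinOrder_of_finite _
  have hk : FreeGroup.of j ^ orderOf (FreeGroup.of j : Γ) ∈ K := by
    rw [← QuotientGroup.eq_one_iff, QuotientGroup.mk_pow, pow_orderOf_eq_one]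
  refine ⟨⟨_, hk⟩, γ, ?_⟩
  rw [foxDeriv_apply, foxLift_of_pow_left, prod_mulSingle_pow_apply_one hfin,
    prod_mulSingle_pow_apply_of_notMem hγ]
  exact Ne.symm (ofAdd_eq_one.not.mpr one_ne_zero)

/-- If `x_j` generates `Γ`, then `x_c ≡ x_j ^ t` and `∂(x_c x_j^{-t})/∂x_c` is a point mass. -/
lemma exists_foxDeriv_ne_of_zpowers_eq_top {c j : α} (hcj : c ≠ j)
    (hj : (FreeGroup.of j : Γ) ≠ 1) (hgen : Subgroup.zpowers (FreeGroup.of j : Γ) = ⊤) :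
    ∃ (k : K) (γ : Γ), foxDeriv K c k γ ≠ foxDeriv K c k 1 := by
  obtain ⟨t, ht⟩ := Subgroup.mem_zpowers_iff.mp (hgen ▸ Subgroup.mem_top (FreeGroup.of c : Γ))
  have hk : FreeGroup.of c * FreeGroup.of j ^ (-t) ∈ K := by
    rw [← QuotientGroup.eq_one_iff, QuotientGroup.mk_mul, QuotientGroup.mk_zpow, ← ht, zpow_neg,
      mul_inv_cancel]
  have hpoint : foxDeriv K c ⟨_, hk⟩ = Pi.mulSingle 1 (.ofAdd 1) := by
    rw [foxDeriv_apply, map_mul, SemidirectProduct.mul_left, foxLift_of_ne_left K hcj.symm]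
    simp [foxLift]
  refine ⟨⟨_, hk⟩, FreeGroup.of j, ?_⟩
  rw [hpoint, Pi.mulSingle_eq_of_ne hj, Pi.mulSingle_eq_same]
  exact Ne.symm (ofAdd_eq_one.not.mpr one_ne_zero)

lemma fixedSubmodule_ne_top [Finite Γ] [Nontrivial α] (hK : K ≠ ⊤) : fixedSubmodule K ≠ ⊤ := by
  obtain ⟨j, hj⟩ : ∃ j : α, (FreeGroup.of j : Γ) ≠ 1 := by
    by_contra! h
    refine hK (eq_top_iff.mpr ?_)
    rw [← FreeGroup.closure_range_of, Subgroup.closure_le]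
    rintro _ ⟨i, rfl⟩
    exact (QuotientGroup.eq_one_iff _).mp (h i)
  by_cases hgen : Subgroup.zpowers (FreeGroup.of j : Γ) = ⊤
  · obtain ⟨c, hcj⟩ := exists_ne j
    obtain ⟨k, γ, h⟩ := exists_foxDeriv_ne_of_zpowers_eq_top K hcj hj hgen
    exact fixedSubmodule_ne_top_of_foxDeriv K h
  · obtain ⟨k, γ, h⟩ := exists_foxDeriv_ne_of_zpowers_ne_top K hgen
    exact fixedSubmodule_ne_top_of_foxDeriv K h

end FoxDerivative

/-- Let `K` be a characteristic finite-index subgroup of a free group `F`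
of rank `d ≥ 2`, `Γ = F/K`, `V = ℚ ⊗_ℤ K^{ab}` with the conjugation `Γ`-action (given by
`conjLin K f` for `f : F`), and `ψ` an automorphism of `F`.  If the only subspaces of
`V` invariant under both `ψ` and every element of `Γ` are `0` and `V`, then `Γ` is
trivial (`K = ⊤`).  Moreover, if `Γ` is nontrivial then the subspace `V^Γ` of
`Γ`-fixed vectors is nonzero, proper, and invariant under the map induced by every
automorphism of `F`. -/
theorem irreducible_joint_action_implies_trivial_deck (d : ℕ) (hd : 2 ≤ d)
    (K : Subgroup (FreeGroup (Fin d))) [K.Characteristic] [K.FiniteIndex]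
    (ψ : FreeGroup (Fin d) ≃* FreeGroup (Fin d)) :
    ((∀ W : Submodule ℚ (ℚ ⊗[ℤ] Additive (Abelianization K)),
        (∀ v ∈ W, autLin K ψ v ∈ W) →
        (∀ (f : FreeGroup (Fin d)), ∀ v ∈ W, conjLin K f v ∈ W) →
        W = ⊥ ∨ W = ⊤) → K = ⊤) ∧
    (K ≠ ⊤ →
      fixedSubmodule K ≠ ⊥ ∧ fixedSubmodule K ≠ ⊤ ∧
      ∀ φ : FreeGroup (Fin d) ≃* FreeGroup (Fin d),
        ∀ v ∈ fixedSubmodule K, autLin K φ v ∈ fixedSubmodule K) := by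
  have : Nontrivial (Fin d) := Fin.nontrivial_iff_two_le.mpr hd
  have hbot : fixedSubmodule K ≠ ⊥ :=
    fixedSubmodule_ne_bot K (χ := FreeGroup.lift fun _ => .ofAdd 1) fun h => by
      simpa using DFunLike.congr_fun h (FreeGroup.of ⟨0, by omega⟩)
  have hinv : ∀ φ : FreeGroup (Fin d) ≃* FreeGroup (Fin d),
      ∀ v ∈ fixedSubmodule K, autLin K φ v ∈ fixedSubmodule K :=
    fun φ _ => autLin_mem_fixedSubmodule K φ
  refine ⟨fun hirr => ?_, fun hK => ⟨hbot, fixedSubmodule_ne_top K hK, hinv⟩⟩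
  by_contra hK
  rcases hirr _ (hinv ψ) (fun f _ => conjLin_mem_fixedSubmodule K f) with h | h
  · exact hbot h
  · exact fixedSubmodule_ne_top K hK h
end
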